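/- Let v be a heavy vertex of a tree T that is the common center of at least three vines, and let e be an edge incident to v. Then e is not used in some minimum path covering of T, and P(T) = P(T − e). -/

import Mathlib

/-!
A linear forest `H` has `|V| - |E(H)|` paths, so a minimum path covering is a spanning linear
forest of `T` with the most edges. The ends `b₁, b₂, b₃` of the three vines are distinct light
neighbours of `v`, because from a vine's end the way to its leaf through light vertices is forced.
Pick two of them, `b₁` and `b₂`, other than the far end of `e`. In a minimum covering replace the
(at most two) edges at `v` by `v b₁` and `v b₂`: the result is still a forest inside `T`, the
degrees of `b₁` and `b₂` stay bounded by their degrees in `T`, and the number of edges does not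
drop. This minimum covering avoids `e` and is also a covering of `T - e`, whence
`P(T - e) ≤ P(T) ≤ P(T - e)`.
-/

namespace PaperPC

open SimpleGraph

variable {V : Type*}

/-- The degree of a vertex, via the cardinality of its neighbor set. -/
noncomputable def ndeg (G : SimpleGraph V) (v : V) : ℕ := (G.neighborSet v).ncard

/-- A linear forest: an acyclic graph of maximum degree at most 2,
i.e. a vertex-disjoint union of paths.  A spanning linear subforest of `G`
is exactly a path covering of `G` (isolated vertices are one-vertex paths). -/
def IsLinearForest (H : SimpleGraph V) : Prop :=
  H.IsAcyclic ∧ ∀ v, ndeg H v ≤ 2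

/-- The number of paths of a path covering = number of connected components. -/
noncomputable def numPaths (H : SimpleGraph V) : ℕ := Nat.card H.ConnectedComponent

/-- The path covering number `P(G)`. -/
noncomputable def pathCoverNumber (G : SimpleGraph V) : ℕ :=
  sInf {k | ∃ H ≤ G, IsLinearForest H ∧ numPaths H = k}

/-- `H` is a minimum path covering of `G`. -/
def IsMinPathCover (G H : SimpleGraph V) : Prop :=
  H ≤ G ∧ IsLinearForest H ∧ numPaths H = pathCoverNumber G

open scoped Classical in
/-- The path sequence of a path covering: the multiset of the numbers of vertices
of its paths (a multiset encodes the nondecreasing ordered sequence). -/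
noncomputable def pathSeq [Fintype V] (H : SimpleGraph V) : Multiset ℕ :=
  (Finset.univ : Finset H.ConnectedComponent).val.map fun c => c.supp.ncard

/-- `G` admits a unique path sequence. -/
def UniquePathSequence [Fintype V] (G : SimpleGraph V) : Prop :=
  ∀ H₁ H₂ : SimpleGraph V, IsMinPathCover G H₁ → IsMinPathCover G H₂ →
    pathSeq H₁ = pathSeq H₂

/-- Number of leaves (vertices of degree 1). -/
noncomputable def numLeaves (G : SimpleGraph V) : ℕ := {v | ndeg G v = 1}.ncard

/-- Number of heavy edges (edges both of whose endpoints have degree > 2). -/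
noncomputable def numHeavyEdges (G : SimpleGraph V) : ℕ :=
  {e ∈ G.edgeSet | ∀ v ∈ e, 2 < ndeg G v}.ncard

/-- Number of edges. -/
noncomputable def numEdges (G : SimpleGraph V) : ℕ := G.edgeSet.ncard

/-- A graph is 2-sparse if no two adjacent vertices both have degree > 2. -/
def TwoSparse (G : SimpleGraph V) : Prop :=
  ∀ u v, G.Adj u v → ndeg G u ≤ 2 ∨ ndeg G v ≤ 2

/-- `G` is a path graph. -/
def IsPathGraph (G : SimpleGraph V) : Prop := G.IsTree ∧ ∀ v, ndeg G v ≤ 2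

/-- `G` is a cycle graph. -/
def IsCycleGraph (G : SimpleGraph V) : Prop := G.Connected ∧ ∀ v, ndeg G v = 2

/-- A generalized star: a tree with exactly one heavy vertex (the center) in which
all vines have the same number of vertices (equivalently, all leaves are at the same
distance from the center). -/
def IsGenStar (G : SimpleGraph V) : Prop :=
  G.IsTree ∧ ∃ c k, 2 < ndeg G c ∧ (∀ v, v ≠ c → ndeg G v ≤ 2) ∧
    ∀ v, ndeg G v = 1 → G.dist c v = k

/-- An L(2,1)-labeling. -/
def IsL21Labeling (G : SimpleGraph V) (f : V → ℕ) : Prop :=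
  (∀ u v, G.Adj u v → 2 ≤ Nat.dist (f u) (f v)) ∧
  (∀ u v, G.dist u v = 2 → 1 ≤ Nat.dist (f u) (f v))

/-- `λ(G)`: the least `k` such that `G` has an L(2,1)-labeling with labels in `{0,…,k}`. -/
noncomputable def lambdaNum (G : SimpleGraph V) : ℕ :=
  sInf {k | ∃ f : V → ℕ, IsL21Labeling G f ∧ ∀ v, f v ≤ k}

/-- A λ-labeling: an L(2,1)-labeling with maximum label `λ(G)`. -/
def IsLambdaLabeling (G : SimpleGraph V) (f : V → ℕ) : Prop :=
  IsL21Labeling G f ∧ (∀ v, f v ≤ lambdaNum G) ∧ ∃ v, f v = lambdaNum G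

/-- The set of holes of a labeling: unused labels `h` with `1 ≤ h ≤ λ(G) - 1`. -/
def labHoles (G : SimpleGraph V) (f : V → ℕ) : Set ℕ :=
  {h | 1 ≤ h ∧ h + 1 ≤ lambdaNum G ∧ ∀ v, f v ≠ h}

/-- The hole index `ρ(G)`: minimum number of holes over all λ-labelings. -/
noncomputable def holeIndex (G : SimpleGraph V) : ℕ :=
  sInf {k | ∃ f : V → ℕ, IsLambdaLabeling G f ∧ (labHoles G f).ncard = k}

open scoped Classical in
/-- The island sequence of a labeling: the multiset of cardinalities of the maximal
intervals `[a,b]` of consecutive integers all used by the labeling. -/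
noncomputable def islandSeq [Fintype V] (G : SimpleGraph V) (f : V → ℕ) : Multiset ℕ :=
  (((Finset.range (lambdaNum G + 1)) ×ˢ (Finset.range (lambdaNum G + 1))).filter
    (fun q => q.1 ≤ q.2 ∧ (∀ x ∈ Finset.Icc q.1 q.2, ∃ v, f v = x) ∧
      (q.1 = 0 ∨ ∀ v, f v ≠ q.1 - 1) ∧ ∀ v, f v ≠ q.2 + 1)).val.map
    fun q => q.2 - q.1 + 1

/-- `G` admits (at least) two distinct island sequences. -/
def MultipleIslandSequences [Fintype V] (G : SimpleGraph V) : Prop :=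
  ∃ f g : V → ℕ, IsLambdaLabeling G f ∧ IsLambdaLabeling G g ∧
    (labHoles G f).ncard = holeIndex G ∧ (labHoles G g).ncard = holeIndex G ∧
    islandSeq G f ≠ islandSeq G g

/-- A vine: a maximal path one of whose endpoints (`a`) is a leaf and all of whose
vertices are light.  Maximality: any light vertex adjacent to the other end already
lies on the path. -/
def IsVine (G : SimpleGraph V) {a b : V} (p : G.Walk a b) : Prop :=
  p.IsPath ∧ ndeg G a = 1 ∧ (∀ v ∈ p.support, ndeg G v ≤ 2) ∧
  ∀ c, G.Adj b c → ndeg G c ≤ 2 → c ∈ p.support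

/-- A vine with center `v`: the (heavy) vertex adjacent to the non-leaf end of the vine. -/
def IsVineWithCenter (G : SimpleGraph V) {a b : V} (p : G.Walk a b) (v : V) : Prop :=
  IsVine G p ∧ G.Adj b v ∧ 2 < ndeg G v

/-- The matching number of the subgraph of `G` induced by `S`. -/
noncomputable def matchingNumberOn (G : SimpleGraph V) (S : Set V) : ℕ :=
  sSup {k | ∃ M : Set (Sym2 V), M ⊆ G.edgeSet ∧ (∀ e ∈ M, ∀ v ∈ e, v ∈ S) ∧
    (∀ e ∈ M, ∀ f ∈ M, e ≠ f → ∀ v, v ∈ e → v ∉ f) ∧ M.ncard = k}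

/-- Labels used in the family `F`: `A`, or `B k` where `k` records the number of
vertices of each vine of the labeled generalized star that produced the label. -/
inductive Lab | A | B (k : ℕ)

/-- A labeled generalized star with center `c` whose vines have `k` vertices each
(equivalently, every leaf is at distance `k` from `c`); the degenerate case
`deg c = 2` is the convention regarding a path of length `2k` as a labeled
generalized star with two vines.  The neighbors of the center are labeled `B k`,
the other non-leaf vertices (and the center) are labeled `A`, leaves are unlabeled. -/
def IsLGenStar {W : Type*} (H : SimpleGraph W) (c : W) (k : ℕ)
    (lab : W → Option Lab) : Prop :=
  H.IsTree ∧ 2 ≤ ndeg H c ∧ (∀ v, v ≠ c → ndeg H v ≤ 2) ∧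
  (∀ v, ndeg H v = 1 → H.dist c v = k) ∧
  lab c = some Lab.A ∧
  (∀ v, H.Adj c v → lab v = some (Lab.B k)) ∧
  (∀ v, v ≠ c → ¬H.Adj c v → ndeg H v = 1 → lab v = none) ∧
  (∀ v, v ≠ c → ¬H.Adj c v → 2 ≤ ndeg H v → lab v = some Lab.A)

/-- A labeled path: a path with at least three vertices, non-leaf vertices labeled `A`. -/
def IsLPath {W : Type*} (H : SimpleGraph W) (lab : W → Option Lab) : Prop :=
  H.IsTree ∧ (∀ v, ndeg H v ≤ 2) ∧ 3 ≤ Nat.card W ∧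
  (∀ v, ndeg H v = 1 → lab v = none) ∧
  ∀ v, 2 ≤ ndeg H v → lab v = some Lab.A

/-- The induced subgraph of `T` on `s` is a labeled generalized star. -/
def LGenStarOn (T : SimpleGraph V) (s : Set V) (c : V) (k : ℕ)
    (lab : V → Option Lab) : Prop :=
  ∃ hc : c ∈ s, IsLGenStar (T.induce s) ⟨c, hc⟩ k fun v => lab v.1

/-- The induced subgraph of `T` on `s` is a labeled path. -/
def LPathOn (T : SimpleGraph V) (s : Set V) (lab : V → Option Lab) : Prop :=
  IsLPath (T.induce s) fun v => lab v.1

/-- The family `F` of labeled trees, realized as induced subgraphs (on vertex sets `s`)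
of an ambient graph `T`:  start from a labeled generalized star with at least three
vines or from a labeled path, and repeatedly attach, via a single new edge, a labeled
generalized star with at least three vines at a vertex labeled `A` (Type-1), a labeled
path by one of its non-leaf vertices at a vertex labeled `A` (Type-2), or a labeled
generalized star whose vines have the same number of vertices `k` as those of the star
that labeled `u` with `B k`, at a vertex `u` labeled `B k` (Type-3). -/
inductive InF (T : SimpleGraph V) : Set V → (V → Option Lab) → Prop
  | base_star (s : Set V) (c : V) (k : ℕ) (lab : V → Option Lab) :
      LGenStarOn T s c k lab → 3 ≤ {w ∈ s | T.Adj c w}.ncard → InF T s lab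
  | base_path (s : Set V) (lab : V → Option Lab) :
      LPathOn T s lab → InF T s lab
  | type1 (s : Set V) (lab : V → Option Lab) (t : Set V) (lab' : V → Option Lab)
      (u c : V) (k : ℕ) :
      InF T s lab → Disjoint s t → u ∈ s → c ∈ t → lab u = some Lab.A →
      LGenStarOn T t c k lab' → 3 ≤ {w ∈ t | T.Adj c w}.ncard →
      (∀ x ∈ s, ∀ y ∈ t, (T.Adj x y ↔ x = u ∧ y = c)) →
      (∀ x ∈ s, lab' x = lab x) →
      InF T (s ∪ t) lab'
  | type2 (s : Set V) (lab : V → Option Lab) (t : Set V) (lab' : V → Option Lab)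
      (u v : V) :
      InF T s lab → Disjoint s t → u ∈ s → v ∈ t → lab u = some Lab.A →
      LPathOn T t lab' → 2 ≤ {w ∈ t | T.Adj v w}.ncard →
      (∀ x ∈ s, ∀ y ∈ t, (T.Adj x y ↔ x = u ∧ y = v)) →
      (∀ x ∈ s, lab' x = lab x) →
      InF T (s ∪ t) lab'
  | type3 (s : Set V) (lab : V → Option Lab) (t : Set V) (lab' : V → Option Lab)
      (u c : V) (k : ℕ) :
      InF T s lab → Disjoint s t → u ∈ s → c ∈ t → lab u = some (Lab.B k) →
      LGenStarOn T t c k lab' →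
      (∀ x ∈ s, ∀ y ∈ t, (T.Adj x y ↔ x = u ∧ y = c)) →
      (∀ x ∈ s, lab' x = lab x) →
      InF T (s ∪ t) lab'

/-- `G` is obtained from the tree `T` by expanding each edge of `T` into a complete
graph of arbitrary order: there is an embedding `ι` of the vertices of `T` and an
assignment `b` of a block of vertices of `G` to each edge of `T` such that an original
vertex lies in the block of an edge iff it is an endpoint of that edge, blocks of
distinct edges meet only in original vertices, every vertex of `G` lies in some block,
and two distinct vertices of `G` are adjacent iff they lie in a common block. -/
def IsBlockExpansion {U W : Type*} (T : SimpleGraph U) (G : SimpleGraph W) : Prop :=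
  ∃ (ι : U ↪ W) (b : Sym2 U → Set W),
    (∀ (u : U), ∀ e ∈ T.edgeSet, (ι u ∈ b e ↔ u ∈ e)) ∧
    (∀ e ∈ T.edgeSet, ∀ f ∈ T.edgeSet, e ≠ f → b e ∩ b f ⊆ Set.range ι) ∧
    (∀ w : W, ∃ e ∈ T.edgeSet, w ∈ b e) ∧
    (∀ x y : W, G.Adj x y ↔ x ≠ y ∧ ∃ e ∈ T.edgeSet, x ∈ b e ∧ y ∈ b e)

end PaperPC

namespace SimpleGraph

variable {V : Type*} {G : SimpleGraph V} {x y : V}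

lemma card_connectedComponent_sup_edge_add_one [Finite V] (hxy : ¬G.Reachable x y) :
    Nat.card (G ⊔ edge x y).ConnectedComponent + 1 = Nat.card G.ConnectedComponent := by
  classical
  let g : V → G.ConnectedComponent := fun a =>
    if G.Reachable a y then G.connectedComponentMk x else G.connectedComponentMk a
  have hg_adj : ∀ a b, (G ⊔ edge x y).Adj a b → g a = g b := by
    intro a b hab
    rcases hab with hab | hab
    · have hy : G.Reachable a y ↔ G.Reachable b y :=
        ⟨hab.symm.reachable.trans, hab.reachable.trans⟩
      simp only [g, hy, ConnectedComponent.eq.2 hab.reachable]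
    · rw [edge_adj] at hab
      rcases hab.1 with ⟨rfl, rfl⟩ | ⟨rfl, rfl⟩ <;> simp [g]
  have hg_walk : ∀ {a b} (p : (G ⊔ edge x y).Walk a b), g a = g b := by
    intro a b p
    induction p with
    | nil => rfl
    | cons h _ ih => exact (hg_adj _ _ h).trans ih
  -- `ψ` identifies the components of `G ⊔ edge x y` with those of `G` other than that of `y`.
  let ψ : (G ⊔ edge x y).ConnectedComponent → G.ConnectedComponent :=
    ConnectedComponent.lift g fun _ _ p _ => hg_walk p
  have hψ_inj : Function.Injective ψ := by
    refine ConnectedComponent.ind₂ fun a b hab => ConnectedComponent.eq.2 ?_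
    have hmono : ∀ {a b}, G.Reachable a b → (G ⊔ edge x y).Reachable a b :=
      fun h => h.mono le_sup_left
    have hxy' : (G ⊔ edge x y).Reachable x y :=
      Adj.reachable <| Or.inr <|
        (edge_adj x y x y).2 ⟨Or.inl ⟨rfl, rfl⟩, fun h => hxy (h ▸ .rfl)⟩
    simp only [ψ, ConnectedComponent.lift_mk, g] at hab
    split_ifs at hab with ha hb hb
    · exact hmono (ha.trans hb.symm)
    · exact (hmono ha).trans (hxy'.symm.trans (hmono (ConnectedComponent.eq.1 hab)))
    · exact (hmono (ConnectedComponent.eq.1 hab)).trans (hxy'.trans (hmono hb.symm))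
    · exact hmono (ConnectedComponent.eq.1 hab)
  have hψ_range : Set.range ψ = {G.connectedComponentMk y}ᶜ := by
    ext c
    induction c using ConnectedComponent.ind with | h a => ?_
    simp only [Set.mem_range, Set.mem_compl_iff, Set.mem_singleton_iff, ConnectedComponent.eq]
    constructor
    · rintro ⟨b, hb⟩ hay
      induction b using ConnectedComponent.ind with | h b => ?_
      simp only [ψ, ConnectedComponent.lift_mk, g] at hb
      split_ifs at hb with hby
      · exact hxy (ConnectedComponent.eq.1 hb |>.trans hay)
      · exact hby (ConnectedComponent.eq.1 hb |>.trans hay)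
    · intro hay
      exact ⟨(G ⊔ edge x y).connectedComponentMk a, by simp [ψ, g, hay]⟩
  have : Nonempty V := ⟨x⟩
  rw [← Nat.card_range_of_injective hψ_inj, hψ_range, Nat.card_coe_set_eq,
    Set.ncard_compl, Set.ncard_singleton]
  have : 0 < Nat.card G.ConnectedComponent := Nat.card_pos
  omega

lemma deleteEdges_sup_edge (h : G.Adj x y) : G.deleteEdges {s(x, y)} ⊔ edge x y = G := by
  ext a b
  simp only [sup_adj, deleteEdges_adj, Set.mem_singleton_iff, edge_adj, Sym2.eq_iff]
  constructor
  · rintro (⟨hab, -⟩ | ⟨⟨rfl, rfl⟩ | ⟨rfl, rfl⟩, -⟩)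
    exacts [hab, h, h.symm]
  · intro hab
    by_cases he : (a = x ∧ b = y) ∨ (a = y ∧ b = x)
    · exact Or.inr ⟨he, hab.ne⟩
    · exact Or.inl ⟨hab, he⟩

lemma IsAcyclic.card_connectedComponent_add_ncard_edgeSet [Finite V] (hG : G.IsAcyclic) :
    Nat.card G.ConnectedComponent + G.edgeSet.ncard = Nat.card V := by
  obtain ⟨n, hn⟩ : ∃ n, G.edgeSet.ncard = n := ⟨_, rfl⟩
  induction n generalizing G with
  | zero =>
    obtain rfl : G = ⊥ := edgeSet_eq_empty.1 ((Set.ncard_eq_zero (Set.toFinite _)).1 hn)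
    rw [hn, add_zero]
    refine (Nat.card_congr <|
      Equiv.ofBijective (⊥ : SimpleGraph V).connectedComponentMk ⟨?_, ?_⟩).symm
    · exact fun a b h => reachable_bot.1 (ConnectedComponent.exact h)
    · exact ConnectedComponent.ind fun a => ⟨a, rfl⟩
  | succ n ih =>
    obtain ⟨e, he⟩ := Set.nonempty_of_ncard_ne_zero (by rw [hn]; exact n.succ_ne_zero)
    induction e using Sym2.ind with | h x y => ?_
    have hcard : (G.deleteEdges {s(x, y)}).edgeSet.ncard = n := by
      rw [edgeSet_deleteEdges, Set.ncard_sdiff_singleton_of_mem he, hn, Nat.add_sub_cancel]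
    have hdel := ih (hG.anti (deleteEdges_le {s(x, y)})) hcard
    have hxy := isBridge_iff.1 (isAcyclic_iff_forall_isBridge.1 hG he)
    rw [← card_connectedComponent_sup_edge_add_one hxy, deleteEdges_sup_edge he, hcard] at hdel
    omega

end SimpleGraph

namespace PaperPC

open SimpleGraph

variable {V : Type*} {G H T : SimpleGraph V}

lemma ndeg_mono [Finite V] (h : G ≤ H) (x : V) : ndeg G x ≤ ndeg H x :=
  Set.ncard_le_ncard (neighborSet_mono h x)

lemma ncard_incidenceSet_eq_ndeg (x : V) : (G.incidenceSet x).ncard = ndeg G x := by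
  classical
  rw [ndeg, ← Nat.card_coe_set_eq, ← Nat.card_coe_set_eq]
  exact Nat.card_congr (G.incidenceSetEquivNeighborSet x)

lemma isLinearForest_bot : IsLinearForest (⊥ : SimpleGraph V) :=
  ⟨isAcyclic_bot, fun x => by simp [ndeg, neighborSet]⟩

lemma pathCoverNumber_le (hHG : H ≤ G) (hH : IsLinearForest H) :
    pathCoverNumber G ≤ numPaths H :=
  Nat.sInf_le ⟨H, hHG, hH, rfl⟩

lemma exists_isMinPathCover (G : SimpleGraph V) : ∃ H, IsMinPathCover G H := by
  have hne : {k | ∃ H ≤ G, IsLinearForest H ∧ numPaths H = k}.Nonempty :=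
    ⟨_, ⊥, bot_le, isLinearForest_bot, rfl⟩
  obtain ⟨H, hHG, hH, hnum⟩ := Nat.sInf_mem hne
  exact ⟨H, hHG, hH, hnum⟩

lemma pathCoverNumber_anti (h : H ≤ G) : pathCoverNumber G ≤ pathCoverNumber H := by
  obtain ⟨F, hFH, hF, hnum⟩ := exists_isMinPathCover H
  exact hnum ▸ pathCoverNumber_le (hFH.trans h) hF

lemma IsMinPathCover.pathCoverNumber_deleteEdges (hH : IsMinPathCover G H) {e : Sym2 V}
    (he : e ∉ H.edgeSet) : pathCoverNumber (G.deleteEdges {e}) = pathCoverNumber G := by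
  have hle : H ≤ G.deleteEdges {e} := fun x y hxy =>
    (deleteEdges_adj ..).2 ⟨hH.1 hxy, fun hxy' => he (Set.mem_singleton_iff.1 hxy' ▸ hxy)⟩
  exact le_antisymm (hH.2.2 ▸ pathCoverNumber_le hle hH.2.1)
    (pathCoverNumber_anti (deleteEdges_le _))

lemma numPaths_le_of_ncard_edgeSet_le [Finite V] (hG : G.IsAcyclic) (hH : H.IsAcyclic)
    (h : G.edgeSet.ncard ≤ H.edgeSet.ncard) : numPaths H ≤ numPaths G := by
  have hGc := hG.card_connectedComponent_add_ncard_edgeSet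
  have hHc := hH.card_connectedComponent_add_ncard_edgeSet
  unfold numPaths
  omega

def reroute (H : SimpleGraph V) (v b₁ b₂ : V) : SimpleGraph V :=
  H.deleteIncidenceSet v ⊔ edge v b₁ ⊔ edge v b₂

section reroute

variable {v b₁ b₂ : V}

lemma reroute_le (hHT : H ≤ T) (h₁ : T.Adj v b₁) (h₂ : T.Adj v b₂) : reroute H v b₁ b₂ ≤ T :=
  sup_le (sup_le ((H.deleteIncidenceSet_le v).trans hHT) ((edge_le_iff T).2 (Or.inr h₁)))
    ((edge_le_iff T).2 (Or.inr h₂))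

lemma reroute_adj_center {u : V} (h : (reroute H v b₁ b₂).Adj v u) : u = b₁ ∨ u = b₂ := by
  simp only [reroute, sup_adj, deleteIncidenceSet_adj, edge_adj] at h
  grind

lemma reroute_adj_of_ne {x y : V} (hxv : x ≠ v) (hx₁ : x ≠ b₁) (hx₂ : x ≠ b₂)
    (h : (reroute H v b₁ b₂).Adj x y) : H.Adj x y := by
  simp only [reroute, sup_adj, deleteIncidenceSet_adj, edge_adj] at h
  grind

lemma isLinearForest_reroute [Finite V] (hT : T.IsAcyclic) (hHT : H ≤ T)
    (hH : IsLinearForest H) (h₁ : T.Adj v b₁) (h₂ : T.Adj v b₂) (hl₁ : ndeg T b₁ ≤ 2)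
    (hl₂ : ndeg T b₂ ≤ 2) :
    IsLinearForest (reroute H v b₁ b₂) := by
  have hle := reroute_le hHT h₁ h₂
  refine ⟨hT.anti hle, fun x => ?_⟩
  by_cases hxv : x = v
  · subst hxv
    calc ndeg (reroute H x b₁ b₂) x ≤ ({b₁, b₂} : Set V).ncard :=
          Set.ncard_le_ncard fun u hu => reroute_adj_center hu
      _ ≤ 2 := (Set.ncard_insert_le _ _).trans (by rw [Set.ncard_singleton])
  by_cases hx₁ : x = b₁
  · exact hx₁ ▸ (ndeg_mono hle b₁).trans hl₁
  by_cases hx₂ : x = b₂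
  · exact hx₂ ▸ (ndeg_mono hle b₂).trans hl₂
  exact (Set.ncard_le_ncard fun y hy => reroute_adj_of_ne hxv hx₁ hx₂ hy).trans (hH.2 x)

lemma ncard_edgeSet_le_reroute [Finite V] (hH : ndeg H v ≤ 2) (hb : b₁ ≠ b₂) (hv₁ : v ≠ b₁)
    (hv₂ : v ≠ b₂) : H.edgeSet.ncard ≤ (reroute H v b₁ b₂).edgeSet.ncard := by
  have hedges : (reroute H v b₁ b₂).edgeSet =
      (H.edgeSet \ H.incidenceSet v) ∪ {s(v, b₁), s(v, b₂)} := by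
    rw [reroute, edgeSet_sup, edgeSet_sup, edgeSet_deleteIncidenceSet, edgeSet_edge_of_ne hv₁,
      edgeSet_edge_of_ne hv₂, Set.union_assoc, Set.singleton_union]
  have hdisj : Disjoint (H.edgeSet \ H.incidenceSet v) {s(v, b₁), s(v, b₂)} := by
    refine Set.disjoint_left.2 fun e he he' => he.2 ⟨he.1, ?_⟩
    rcases he' with rfl | rfl <;> exact Sym2.mem_mk_left _ _
  have hpair : ({s(v, b₁), s(v, b₂)} : Set (Sym2 V)).ncard = 2 :=
    Set.ncard_pair (by simp [hb, hv₂])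
  calc H.edgeSet.ncard = (H.edgeSet \ H.incidenceSet v).ncard + (H.incidenceSet v).ncard :=
        (Set.ncard_sdiff_add_ncard_of_subset (H.incidenceSet_subset v)).symm
    _ ≤ (H.edgeSet \ H.incidenceSet v).ncard + 2 := by rw [ncard_incidenceSet_eq_ndeg]; omega
    _ = (reroute H v b₁ b₂).edgeSet.ncard := by rw [hedges, Set.ncard_union_eq hdisj, hpair]

end reroute

lemma exists_isMinPathCover_notMem_edgeSet [Finite V] (hT : T.IsAcyclic) {v u b₁ b₂ : V}
    (h₁ : T.Adj v b₁) (h₂ : T.Adj v b₂) (hb : b₁ ≠ b₂) (hl₁ : ndeg T b₁ ≤ 2)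
    (hl₂ : ndeg T b₂ ≤ 2) (hu₁ : u ≠ b₁) (hu₂ : u ≠ b₂) :
    ∃ H, IsMinPathCover T H ∧ s(v, u) ∉ H.edgeSet := by
  obtain ⟨H, hHT, hH, hnum⟩ := exists_isMinPathCover T
  have hle := reroute_le hHT h₁ h₂
  have hlin := isLinearForest_reroute hT hHT hH h₁ h₂ hl₁ hl₂
  have hfewer : numPaths (reroute H v b₁ b₂) ≤ numPaths H :=
    numPaths_le_of_ncard_edgeSet_le hH.1 hlin.1
      (ncard_edgeSet_le_reroute (hH.2 v) hb h₁.ne h₂.ne)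
  refine ⟨_, ⟨hle, hlin, le_antisymm (hnum ▸ hfewer) (pathCoverNumber_le hle hlin)⟩,
    fun he => ?_⟩
  rcases reroute_adj_center he with rfl | rfl
  exacts [hu₁ rfl, hu₂ rfl]

lemma eq_of_adj_of_ndeg_eq_one {x a b : V} (hx : ndeg G x = 1) (ha : G.Adj x a)
    (hb : G.Adj x b) : a = b := by
  obtain ⟨c, hc⟩ := Set.ncard_eq_one.1 hx
  have ha' : a ∈ G.neighborSet x := ha
  have hb' : b ∈ G.neighborSet x := hb
  rw [hc] at ha' hb'
  exact ha'.trans hb'.symm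

lemma eq_of_adj_of_ndeg_le_two [Finite V] {x w a b : V} (hx : ndeg G x ≤ 2) (hw : G.Adj x w)
    (ha : G.Adj x a) (hb : G.Adj x b) (hwa : w ≠ a) (hwb : w ≠ b) : a = b := by
  by_contra hab
  exact hx.not_gt <|
    (Set.two_lt_ncard_iff (Set.toFinite _)).2 ⟨w, a, b, hw, ha, hb, hwa, hwb, hab⟩

/-- A path through light vertices that leaves `x` away from `w` can only continue in one way. -/
lemma leaf_eq_of_isPath [Finite V] {x y y' w : V} (q : G.Walk x y) (q' : G.Walk x y')
    (hq : q.IsPath) (hq' : q'.IsPath) (hlight : ∀ z ∈ q.support, ndeg G z ≤ 2)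
    (hy : ndeg G y = 1) (hy' : ndeg G y' = 1) (hw : G.Adj x w) (hwq : w ∉ q.support)
    (hwq' : w ∉ q'.support) : y = y' := by
  induction q generalizing w with
  | nil =>
    cases q' with
    | nil => rfl
    | cons h' r' =>
      obtain rfl := eq_of_adj_of_ndeg_eq_one hy hw h'
      simp at hwq'
  | @cons x d y h r ih =>
    cases q' with
    | nil =>
      obtain rfl := eq_of_adj_of_ndeg_eq_one hy' hw h
      simp at hwq
    | @cons _ d' _ h' r' =>
      obtain ⟨hr, hxr⟩ := (Walk.cons_isPath_iff h r).1 hq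
      obtain ⟨hr', hxr'⟩ := (Walk.cons_isPath_iff h' r').1 hq'
      have hwd : w ≠ d := fun e => hwq (by simp [e])
      have hwd' : w ≠ d' := fun e => hwq' (by simp [e])
      obtain rfl := eq_of_adj_of_ndeg_le_two (hlight _ (by simp)) hw h h' hwd hwd'
      exact ih r' hr hr' (fun z hz => hlight z (by simp [hz])) hy h.symm hxr hxr'

namespace IsVineWithCenter

variable {v a b : V} {p : G.Walk a b}

lemma center_adj (h : IsVineWithCenter G p v) : G.Adj v b :=
  h.2.1.symm

lemma ndeg_end_le_two (h : IsVineWithCenter G p v) : ndeg G b ≤ 2 :=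
  h.1.2.2.1 b p.end_mem_support

lemma center_notMem_support (h : IsVineWithCenter G p v) : v ∉ p.support := fun hv => by
  have := h.1.2.2.1 v hv
  have := h.2.2
  omega

lemma leaf_eq [Finite V] {a' : V} {p' : G.Walk a' b} (h : IsVineWithCenter G p v)
    (h' : IsVineWithCenter G p' v) : a = a' :=
  leaf_eq_of_isPath p.reverse p'.reverse h.1.1.reverse h'.1.1.reverse
    (by simpa using h.1.2.2.1) h.1.2.1 h'.1.2.1 h.2.1
    (by simpa using h.center_notMem_support) (by simpa using h'.center_notMem_support)

end IsVineWithCenter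

/-- **Lemma (Statement 11).** Let `v` be a heavy vertex of a tree `T` which is the
common center of at least three vines, and let `e` be an edge incident to `v`.  Then
`e` is unused in some minimum path covering of `T`, and `P(T) = P(T − e)`. -/
theorem center_three_vines_delete_edge {V : Type*} [Fintype V] (T : SimpleGraph V)
    (hT : T.IsTree) {v a₁ b₁ a₂ b₂ a₃ b₃ : V}
    (p₁ : T.Walk a₁ b₁) (p₂ : T.Walk a₂ b₂) (p₃ : T.Walk a₃ b₃)
    (h₁ : IsVineWithCenter T p₁ v) (h₂ : IsVineWithCenter T p₂ v)
    (h₃ : IsVineWithCenter T p₃ v)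
    (hne : a₁ ≠ a₂ ∧ a₁ ≠ a₃ ∧ a₂ ≠ a₃)
    (e : Sym2 V) (he : e ∈ T.edgeSet) (hv : v ∈ e) :
    (∃ H, IsMinPathCover T H ∧ e ∉ H.edgeSet) ∧
      pathCoverNumber T = pathCoverNumber (T.deleteEdges {e}) := by
  obtain ⟨u, rfl⟩ := Sym2.mem_iff_exists.1 hv
  obtain ⟨h₁₂, h₁₃, h₂₃⟩ := hne
  have hb₁₂ : b₁ ≠ b₂ := by rintro rfl; exact h₁₂ (h₁.leaf_eq h₂)
  have hb₁₃ : b₁ ≠ b₃ := by rintro rfl; exact h₁₃ (h₁.leaf_eq h₃)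
  have hb₂₃ : b₂ ≠ b₃ := by rintro rfl; exact h₂₃ (h₂.leaf_eq h₃)
  obtain ⟨H, hH, heH⟩ : ∃ H, IsMinPathCover T H ∧ s(v, u) ∉ H.edgeSet := by
    by_cases hu₁ : u = b₁
    · exact exists_isMinPathCover_notMem_edgeSet hT.isAcyclic h₂.center_adj h₃.center_adj hb₂₃
        h₂.ndeg_end_le_two h₃.ndeg_end_le_two (hu₁ ▸ hb₁₂) (hu₁ ▸ hb₁₃)
    by_cases hu₂ : u = b₂
    · exact exists_isMinPathCover_notMem_edgeSet hT.isAcyclic h₁.center_adj h₃.center_adj hb₁₃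
        h₁.ndeg_end_le_two h₃.ndeg_end_le_two hu₁ (hu₂ ▸ hb₂₃)
    · exact exists_isMinPathCover_notMem_edgeSet hT.isAcyclic h₁.center_adj h₂.center_adj hb₁₂
        h₁.ndeg_end_le_two h₂.ndeg_end_le_two hu₁ hu₂
  exact ⟨⟨H, hH, heH⟩, (hH.pathCoverNumber_deleteEdges heH).symm⟩

end PaperPC
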